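/- Let M be a deterministic macro tree transducer with input alphabet Σ and output alphabet Δ, and let R ⊆ T_Δ be a regular tree language. Then the preimage τ_M⁻¹(R) = { s ∈ T_Σ : τ_M(s) is defined and τ_M(s) ∈ R } is a regular tree language. In particular, the domain dom(τ_M) of τ_M is a regular tree language. -/

import Mathlib

/-! ## Finite ordered ranked trees -/

/-- Finite ordered labeled trees. -/
inductive RTree (α : Type) : Type
  | node : α → List (RTree α) → RTree α

namespace RTree

variable {α β : Type}

/-- The label of the root node. -/
def label : RTree α → α
  | node a _ => a

mutual
  /-- The size (number of nodes) of a tree. -/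
  def size : RTree α → ℕ
    | node _ ts => 1 + sizeList ts
  def sizeList : List (RTree α) → ℕ
    | [] => 0
    | t :: ts => size t + sizeList ts
end

mutual
  /-- The height of a tree (a leaf has height 1). -/
  def height : RTree α → ℕ
    | node _ ts => 1 + heightList ts
  def heightList : List (RTree α) → ℕ
    | [] => 0
    | t :: ts => max (height t) (heightList ts)
end

mutual
  /-- Relabeling of a tree. -/
  def map (f : α → β) : RTree α → RTree β
    | node a ts => node (f a) (mapList f ts)
  def mapList (f : α → β) : List (RTree α) → List (RTree β)
    | [] => []
    | t :: ts => map f t :: mapList f ts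
end

/-- `WF rk t` means `t` is a tree over the ranked alphabet with rank function `rk`:
every node labeled `a` has exactly `rk a` children.  Thus `T_Σ = {t | WF rk t}`. -/
inductive WF (rk : α → ℕ) : RTree α → Prop
  | node {a : α} {ts : List (RTree α)} :
      ts.length = rk a → (∀ t ∈ ts, WF rk t) → WF rk (node a ts)

/-- `SubtreeAt t u r`: `u` is (the Dewey path of) a node of `t` and `r` is the
subtree of `t` rooted at `u`. -/
inductive SubtreeAt : RTree α → List ℕ → RTree α → Prop
  | here (t : RTree α) : SubtreeAt t [] t
  | child {a : α} {ts : List (RTree α)} {i : ℕ} {u : List ℕ} {ti r : RTree α} :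
      ts[i]? = some ti → SubtreeAt ti u r → SubtreeAt (node a ts) (i :: u) r

/-- `ReplaceAt t u r t'`: `u` is a node of `t`, and `t'` is the tree `t[u ← r]`
obtained from `t` by replacing the subtree rooted at `u` by `r`. -/
inductive ReplaceAt : RTree α → List ℕ → RTree α → RTree α → Prop
  | here (t r : RTree α) : ReplaceAt t [] r r
  | child {a : α} {ts : List (RTree α)} {i : ℕ} {u : List ℕ} {r ti ti' : RTree α} :
      ts[i]? = some ti → ReplaceAt ti u r ti' →
      ReplaceAt (node a ts) (i :: u) r (node a (ts.set i ti'))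

end RTree

/-- A (complete) deterministic finite-state bottom-up tree automaton over the
alphabet `S`, with state set `P` and final states `final`. -/
structure BUA (S P : Type) where
  delta : S → List P → P
  final : Set P

variable {S P : Type}

mutual
  /-- The state reached by a bottom-up automaton on a tree. -/
  def buaRun (A : BUA S P) : RTree S → P
    | .node a ts => A.delta a (buaRunList A ts)
  def buaRunList (A : BUA S P) : List (RTree S) → List P
    | [] => []
    | t :: ts => buaRun A t :: buaRunList A ts
end

/-- A tree language over the ranked alphabet `(S, rk)` is regular if it is recognized
by a deterministic finite-state bottom-up tree automaton. -/
def RegularTreeLang (rk : S → ℕ) (L : Set (RTree S)) : Prop :=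
  ∃ (P : Type) (_ : Fintype P) (A : BUA S P),
    L = {t | RTree.WF rk t ∧ buaRun A t ∈ A.final}
/-! ## Deterministic macro tree transducers

A state of rank `m+1` is encoded by `prm q = m` (its number of context parameters).
Right-hand sides of rules are trees over `Δ ∪ Q ∪ X ∪ Y`, where every `Q`-labeled
node has an input variable `x_i` as its (implicit) first child; this is encoded by
the constructor `MRhs.call q i ps`.  A top-down tree transducer is exactly a macro
tree transducer all of whose states have rank one (`prm q = 0`).

To be able to talk about partial inputs `s[u ← x]`, input trees are trees over
`Option S`, where `none` plays the role of the fresh rank-0 symbol `x`; an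
ordinary input tree `s` is represented as `RTree.map some s`.  Outputs (sentential
forms) are trees over the alphabet `PL Q D`: output symbols `PL.out d`, unresolved
state calls `PL.st q` (i.e. `q(x, t₁, …, t_m)`, whose children are the current
parameter trees), and formal context parameters `PL.pr j` (i.e. `y_{j+1}`). -/

/-- Labels of sentential forms produced by a macro tree transducer. -/
inductive PL (Q D : Type) : Type
  | out : D → PL Q D
  | st : Q → PL Q D
  | pr : ℕ → PL Q D

/-- Right-hand sides of rules of a macro tree transducer with states `Q` and output
alphabet `D`: `out d ts` is an output symbol with subtrees, `param j` is the context
parameter `y_{j+1}`, and `call q i ps` is a state call `q(x_{i+1}, ps)`. -/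
inductive MRhs (Q D : Type) : Type
  | out : D → List (MRhs Q D) → MRhs Q D
  | param : ℕ → MRhs Q D
  | call : Q → ℕ → List (MRhs Q D) → MRhs Q D

/-- Well-formedness of a right-hand side for a rule of a state with `m` parameters
and an input symbol of rank `k`: output symbols have the right number of children,
parameters are among `y_1, …, y_m`, input variables are among `x_1, …, x_k`, and a
call of state `q'` passes exactly `prm q'` parameter trees. -/
inductive RhsWF {Q D : Type} (rkD : D → ℕ) (prm : Q → ℕ) (k m : ℕ) : MRhs Q D → Prop
  | out {d ts} : ts.length = rkD d → (∀ t ∈ ts, RhsWF rkD prm k m t) →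
      RhsWF rkD prm k m (.out d ts)
  | param {j} : j < m → RhsWF rkD prm k m (.param j)
  | call {q i ps} : i < k → ps.length = prm q → (∀ t ∈ ps, RhsWF rkD prm k m t) →
      RhsWF rkD prm k m (.call q i ps)

/-- A deterministic macro tree transducer with states `Q`, input alphabet `(S, rkS)`
and output alphabet `(D, rkD)`.  `prm q` is the number of context parameters of
state `q` (so `q` has rank `prm q + 1`); `rules q σ` is the right-hand side of the
`(q,σ)`-rule, if present (determinism: at most one rule per pair). -/
structure MTT (Q S D : Type) where
  rkS : S → ℕ
  rkD : D → ℕ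
  prm : Q → ℕ
  init : Q
  rules : Q → S → Option (MRhs Q D)

namespace MTT

variable {Q S D : Type}

/-- `M` is a well-formed macro tree transducer: the initial state has rank one and
all right-hand sides are well-formed. -/
def Proper (M : MTT Q S D) : Prop :=
  M.prm M.init = 0 ∧
    ∀ q σ r, M.rules q σ = some r → RhsWF M.rkD M.prm (M.rkS σ) (M.prm q) r

/-- `M` is total: there is exactly one rule for every state and input symbol. -/
def Total (M : MTT Q S D) : Prop := ∀ q σ, (M.rules q σ).isSome

end MTT

/-- A top-down tree transducer is a macro tree transducer each of whose states has
rank one, i.e. no context parameters. -/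
def IsTopDown {Q S D : Type} (M : MTT Q S D) : Prop := ∀ q, M.prm q = 0

/-- A macro tree transducer is monadic if its input and output ranked alphabets
only contain symbols of rank 1 and rank 0. -/
def MTT.Monadic {Q S D : Type} (M : MTT Q S D) : Prop :=
  (∀ σ, M.rkS σ ≤ 1) ∧ (∀ d, M.rkD d ≤ 1)

variable {Q S D : Type}

mutual
  /-- Second-order substitution of the parameter leaves `y_{j+1}` of a sentential
  form by the trees `vs`. -/
  def psubst (vs : List (RTree (PL Q D))) : RTree (PL Q D) → RTree (PL Q D)
    | .node (.pr j) _ => vs.getD j (.node (.pr j) [])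
    | .node (.out d) ts => .node (.out d) (psubstList vs ts)
    | .node (.st q) ts => .node (.st q) (psubstList vs ts)
  def psubstList (vs : List (RTree (PL Q D))) :
      List (RTree (PL Q D)) → List (RTree (PL Q D))
    | [] => []
    | t :: ts => psubst vs t :: psubstList vs ts
end

/-- The fresh rank-0 input symbol `x` used in partial inputs `s[u ← x]`. -/
def xLeaf {S : Type} : RTree (Option S) := .node none []

mutual
  /-- Big-step semantics of a macro tree transducer: `MEval M q s t` means that the
  computation of `M` started in state `q` on the input tree `s` (a tree over
  `Option S`, where `none` is the fresh symbol `x` of partial inputs) produces the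
  (sentential form) tree `t`.  On the symbol `x` the computation blocks, yielding
  the unresolved call `q(x, y_1, …, y_m)`.  For `s ∈ T_Σ` (no occurrence of `x`)
  and well-formed transducers, `t` contains no `PL.st` labels, and `M_q(s)` is
  defined iff such a `t` exists; determinism makes `t` unique. -/
  inductive MEval (M : MTT Q S D) : Q → RTree (Option S) → RTree (PL Q D) → Prop
    | atX (q : Q) :
        MEval M q (.node none [])
          (.node (.st q) ((List.range (M.prm q)).map fun j => .node (.pr j) []))
    | step {q : Q} {σ : S} {ss : List (RTree (Option S))} {r : MRhs Q D}
        {t : RTree (PL Q D)} :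
        M.rules q σ = some r → MExpand M ss r t → MEval M q (.node (some σ) ss) t

  /-- Evaluation of a right-hand side with current input subtrees `ss`. -/
  inductive MExpand (M : MTT Q S D) :
      List (RTree (Option S)) → MRhs Q D → RTree (PL Q D) → Prop
    | out {ss d ts us} : MExpandList M ss ts us →
        MExpand M ss (.out d ts) (.node (.out d) us)
    | param {ss j} : MExpand M ss (.param j) (.node (.pr j) [])
    | call {ss : List (RTree (Option S))} {q : Q} {i : ℕ} {ps : List (MRhs Q D)}
        {si : RTree (Option S)} {vs : List (RTree (PL Q D))} {u : RTree (PL Q D)} :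
        ss[i]? = some si → MExpandList M ss ps vs → MEval M q si u →
        MExpand M ss (.call q i ps) (psubst vs u)

  inductive MExpandList (M : MTT Q S D) :
      List (RTree (Option S)) → List (MRhs Q D) → List (RTree (PL Q D)) → Prop
    | nil {ss} : MExpandList M ss [] []
    | cons {ss t ts u us} : MExpand M ss t u → MExpandList M ss ts us →
        MExpandList M ss (t :: ts) (u :: us)
end

/-- The translation `τ_M ⊆ T_Σ × T_Δ` realized by a macro tree transducer `M`
(the graph of the partial function `τ_M : T_Σ ⇀ T_Δ`). -/
def MTT.tau (M : MTT Q S D) : Set (RTree S × RTree D) :=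
  {p | RTree.WF M.rkS p.1 ∧ MEval M M.init (RTree.map some p.1) (RTree.map PL.out p.2)}

/-! The automaton reading an input tree `s` bottom-up computes the *behavior* of `s`: for each
state `q` of `M` and each tuple `ρ` of states of the output automaton `A`, the state that `A`
reaches on `M_q(s)` when the parameter `y_j` is read as `ρ_j` (or "undefined"). There are only
finitely many behaviors, and the behavior of `σ(s₁, …, s_k)` is computed from those of the
`sᵢ` by running `A` through the right-hand sides of the `σ`-rules: since `A` runs bottom-up, its
state on `t[y ← t₁, …, t_m]` depends only on its states on `t₁, …, t_m`, so a call
`q'(xᵢ, t₁, …, t_n)` is evaluated by applying the behavior of `sᵢ` to the states of the `tⱼ`. -/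

universe u v w

namespace List

variable {α : Type w} {β : Type u} {f : α → Option β} {l : List α}

theorem mapM_eq_some_iff_forall₂ {l' : List β} :
    l.mapM f = some l' ↔ Forall₂ (fun a b => f a = some b) l l' := by
  induction l generalizing l' with
  | nil => cases l' <;> simp
  | cons a l ih => cases l' <;> simp [mapM_cons, Option.bind_eq_some_iff, ih]

theorem exists_mapM_eq_some_iff : (∃ l', l.mapM f = some l') ↔ ∀ a ∈ l, ∃ b, f a = some b := by
  induction l with
  | nil => simp
  | cons a l ih => simp [mapM_cons, Option.bind_eq_some_iff, ← ih]

theorem mapM_congr {m : Type u → Type v} [Monad m] [LawfulMonad m] {f g : α → m β}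
    (h : ∀ a ∈ l, f a = g a) : l.mapM f = l.mapM g := by
  induction l with
  | nil => rfl
  | cons a l ih => simp [mapM_cons, h a (by simp), ih fun x hx => h x (by simp [hx])]

end List

namespace RTree

variable {α β : Type}

@[induction_eliminator]
theorem induction {motive : RTree α → Prop}
    (node : ∀ a ts, (∀ t ∈ ts, motive t) → motive (node a ts)) (t : RTree α) : motive t :=
  RTree.rec (motive_2 := fun ts => ∀ t ∈ ts, motive t) node nofun
    (fun _ _ ih ihs => List.forall_mem_cons.mpr ⟨ih, ihs⟩) t

@[simp]
theorem mapList_eq_map (f : α → β) (ts : List (RTree α)) : mapList f ts = ts.map (map f) := by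
  induction ts <;> simp [mapList, *]

@[simp]
theorem map_node (f : α → β) (a : α) (ts : List (RTree α)) :
    (node a ts).map f = node (f a) (ts.map (map f)) := by
  simp [map]

end RTree

@[induction_eliminator]
theorem MRhs.induction {motive : MRhs Q D → Prop}
    (out : ∀ d ts, (∀ t ∈ ts, motive t) → motive (.out d ts))
    (param : ∀ j, motive (.param j))
    (call : ∀ q i ps, (∀ t ∈ ps, motive t) → motive (.call q i ps)) (r : MRhs Q D) :
    motive r :=
  MRhs.rec (motive_2 := fun ts => ∀ t ∈ ts, motive t) out param call nofun
    (fun _ _ ih ihs => List.forall_mem_cons.mpr ⟨ih, ihs⟩) r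

@[simp]
theorem buaRunList_eq_map (A : BUA S P) (ts : List (RTree S)) :
    buaRunList A ts = ts.map (buaRun A) := by
  induction ts <;> simp [buaRunList, *]

@[simp]
theorem buaRun_node (A : BUA S P) (a : S) (ts : List (RTree S)) :
    buaRun A (.node a ts) = A.delta a (ts.map (buaRun A)) := by
  simp [buaRun]

@[simp]
theorem psubstList_eq_map (vs ts : List (RTree (PL Q D))) :
    psubstList vs ts = ts.map (psubst vs) := by
  induction ts <;> simp [psubstList, *]

/-- `u ∈ T_Δ(Y_m)`, with `PL.pr j` standing for the parameter `y_{j+1}`. -/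
inductive IsOutputTree (rkD : D → ℕ) (m : ℕ) : RTree (PL Q D) → Prop
  | out {d ts} : ts.length = rkD d → (∀ t ∈ ts, IsOutputTree rkD m t) →
      IsOutputTree rkD m (.node (.out d) ts)
  | pr {j} : j < m → IsOutputTree rkD m (.node (.pr j) [])

def paramRun (A : BUA D P) (ρ : List P) : RTree (PL Q D) → Option P
  | .node (.out d) ts => (ts.mapM (paramRun A ρ)).map (A.delta d)
  | .node (.pr j) _ => ρ[j]?
  | .node (.st _) _ => none

theorem paramRun_map_out (A : BUA D P) (ρ : List P) (t : RTree D) :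
    paramRun A ρ (t.map (PL.out (Q := Q))) = some (buaRun A t) := by
  induction t with
  | node d ts ih =>
    have : ts.mapM (fun t => paramRun A ρ (t.map (PL.out (Q := Q)))) = some (ts.map (buaRun A)) :=
      List.mapM_eq_some_iff_forall₂.mpr
        (List.forall₂_map_right_iff.mpr (List.forall₂_same.mpr ih))
    simp [paramRun, List.mapM_map, Function.comp_def, this]

namespace IsOutputTree

variable {rkD : D → ℕ} {m : ℕ} {u : RTree (PL Q D)}

theorem psubst {vs : List (RTree (PL Q D))} (hu : IsOutputTree rkD vs.length u)
    (hvs : ∀ v ∈ vs, IsOutputTree rkD m v) : IsOutputTree rkD m (psubst vs u) := by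
  induction hu with
  | out hlen _ ih =>
    exact .out (by simpa [_root_.psubst] using hlen) (by simpa [_root_.psubst] using ih)
  | @pr j hj =>
    simpa [_root_.psubst, List.getElem?_eq_getElem hj] using hvs _ (List.getElem_mem hj)

theorem exists_eq_map_out (hu : IsOutputTree rkD 0 u) : ∃ t : RTree D, u = t.map PL.out := by
  induction hu with
  | @out d ts _ _ ih =>
    obtain ⟨ts', rfl⟩ : ts ∈ Set.range (List.map (RTree.map PL.out)) := by
      simpa [Set.range_list_map, eq_comm] using ih
    exact ⟨.node d ts', by simp⟩
  | pr hj => omega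

theorem wf_of_map_out {t : RTree D} (ht : IsOutputTree (Q := Q) rkD m (t.map PL.out)) :
    t.WF rkD := by
  induction t with
  | node d ts ih =>
    rw [RTree.map_node] at ht
    cases ht with
    | out hlen hts =>
      exact .node (by simpa using hlen) fun t ht => ih t ht (hts _ (List.mem_map_of_mem ht))

theorem exists_paramRun_eq_some (A : BUA D P) (hu : IsOutputTree rkD m u)
    (ρ : List.Vector P m) : ∃ p, paramRun A ρ.toList u = some p := by
  induction hu with
  | out _ _ ih =>
    obtain ⟨ps, hps⟩ := List.exists_mapM_eq_some_iff.mpr ih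
    exact ⟨_, by simp [paramRun, hps]; rfl⟩
  | @pr j hj => exact ⟨ρ.toList[j]'(by simpa using hj), by simp [paramRun]⟩

theorem paramRun_psubst (A : BUA D P) {vs : List (RTree (PL Q D))} {ρ ws : List P}
    (hu : IsOutputTree rkD vs.length u) (hvs : vs.mapM (paramRun A ρ) = some ws) :
    paramRun A ρ (_root_.psubst vs u) = paramRun A ws u := by
  have hvws := List.mapM_eq_some_iff_forall₂.mp hvs
  induction hu with
  | out _ _ ih =>
    simp only [_root_.psubst, psubstList_eq_map, paramRun, List.mapM_map, Function.comp_def]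
    rw [List.mapM_congr ih]
  | @pr j hj =>
    obtain ⟨hlen, hget⟩ := List.forall₂_iff_get.mp hvws
    simpa [_root_.psubst, paramRun, List.getElem?_eq_getElem hj,
      List.getElem?_eq_getElem (hlen ▸ hj)] using hget j hj (hlen ▸ hj)

theorem paramRun_psubst_eq_bind (A : BUA D P) {n : ℕ} {vs : List (RTree (PL Q D))}
    (hu : IsOutputTree rkD n u) (hvs : ∀ v ∈ vs, IsOutputTree rkD m v) (hlen : vs.length = n)
    {f : List.Vector P n → Option P} (hf : ∀ ρ, paramRun A ρ.toList u = f ρ)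
    (ρ : List.Vector P m) :
    paramRun A ρ.toList (_root_.psubst vs u) = (vs.mapM (paramRun A ρ.toList)).bind
      fun ws => if h : ws.length = n then f ⟨ws, h⟩ else none := by
  obtain ⟨ws, hws⟩ := List.exists_mapM_eq_some_iff.mpr fun v hv =>
    (hvs v hv).exists_paramRun_eq_some A ρ
  have hws' : ws.length = n := by
    rw [← hlen, (List.mapM_eq_some_iff_forall₂.mp hws).length_eq]
  subst hlen
  rw [hu.paramRun_psubst A hws, hws]
  simpa [hws'] using hf ⟨ws, hws'⟩

end IsOutputTree

def Behavior (M : MTT Q S D) (P : Type) : Type := ∀ q : Q, List.Vector P (M.prm q) → Option P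

instance (M : MTT Q S D) [Finite Q] [Finite P] : Finite (Behavior M P) := by
  unfold Behavior; infer_instance

def rhsRun (M : MTT Q S D) (A : BUA D P) (βs : List (Behavior M P)) (ρ : List P) :
    MRhs Q D → Option P
  | .out d ts => (ts.mapM (rhsRun M A βs ρ)).map (A.delta d)
  | .param j => ρ[j]?
  | .call q i ps =>
    βs[i]?.bind fun β => (ps.mapM (rhsRun M A βs ρ)).bind fun vs =>
      if h : vs.length = M.prm q then β q ⟨vs, h⟩ else none

def behaviorBUA (M : MTT Q S D) (A : BUA D P) (F : Set (Behavior M P)) : BUA S (Behavior M P) where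
  delta σ βs q ρ := (M.rules q σ).bind (rhsRun M A βs ρ.toList)
  final := F

theorem MEval.isOutputTree_paramRun {M : MTT Q S D} (A : BUA D P) (F : Set (Behavior M P))
    (hM : M.Proper) {q : Q} {s : RTree (Option S)}
    {u : RTree (PL Q D)} (h : MEval M q s u) :
    ∀ t : RTree S, s = t.map some → IsOutputTree M.rkD (M.prm q) u ∧
      ∀ ρ, paramRun A ρ.toList u = buaRun (behaviorBUA M A F) t q ρ := by
  induction h using MEval.rec
    (motive_2 := fun ss r u _ => ∀ ts : List (RTree S), ss = ts.map (RTree.map some) →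
      ∀ k m, RhsWF M.rkD M.prm k m r → IsOutputTree M.rkD m u ∧
        ∀ ρ : List.Vector P m, paramRun A ρ.toList u =
          rhsRun M A (ts.map (buaRun (behaviorBUA M A F))) ρ.toList r)
    (motive_3 := fun ss rs us _ => ∀ ts : List (RTree S), ss = ts.map (RTree.map some) →
      ∀ k m, (∀ r ∈ rs, RhsWF M.rkD M.prm k m r) →
        us.length = rs.length ∧ (∀ u ∈ us, IsOutputTree M.rkD m u) ∧
        ∀ ρ : List.Vector P m, us.mapM (paramRun A ρ.toList) =
          rs.mapM (rhsRun M A (ts.map (buaRun (behaviorBUA M A F))) ρ.toList)) with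
  | atX => rintro ⟨⟩ hs; simp at hs
  | step hr _ ih =>
    rintro ⟨σ, ts⟩ hs
    simp only [RTree.map_node, RTree.node.injEq, Option.some.injEq] at hs
    obtain ⟨rfl, hss⟩ := hs
    obtain ⟨hwf, hrun⟩ := ih ts hss _ _ (hM.2 _ _ _ hr)
    exact ⟨hwf, fun ρ => by simp [hrun ρ, behaviorBUA, hr]⟩
  | out _ ih ts hss k m hr =>
    cases hr with
    | out hlen hrs =>
      obtain ⟨hlen', hwfs, hruns⟩ := ih ts hss k m hrs
      exact ⟨.out (hlen'.trans hlen) hwfs, fun ρ => by simp [paramRun, rhsRun, hruns ρ]⟩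
  | param ts hss k m hr =>
    cases hr with
    | param hj => exact ⟨.pr hj, fun ρ => by simp [paramRun, rhsRun]⟩
  | @call _ q i ps si vs w hsi _ _ ihs ihw ts hss k m hr =>
    cases hr with
    | call _ hlen hps =>
      obtain ⟨ti, hti, rfl⟩ : ∃ ti, ts[i]? = some ti ∧ RTree.map some ti = si := by
        simpa [hss] using hsi
      obtain ⟨hwfw, hrunw⟩ := ihw ti rfl
      obtain ⟨hlen', hwfs, hruns⟩ := ihs ts hss k m hps
      refine ⟨(hlen'.trans hlen ▸ hwfw).psubst hwfs, fun ρ => ?_⟩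
      rw [hwfw.paramRun_psubst_eq_bind A hwfs (hlen'.trans hlen) hrunw, hruns ρ]
      simp [rhsRun, hti]
  | nil => simp
  | cons _ _ ih ihs ts hss k m hrs =>
    obtain ⟨hwf, hrun⟩ := ih ts hss k m (hrs _ (by simp))
    obtain ⟨hlen, hwfs, hruns⟩ := ihs ts hss k m fun r hr => hrs r (by simp [hr])
    exact ⟨by simp [hlen], List.forall_mem_cons.mpr ⟨hwf, hwfs⟩,
      fun ρ => by simp [List.mapM_cons, hrun, hruns]⟩

section Completeness

theorem exists_mExpandList {M : MTT Q S D} {ss : List (RTree (Option S))}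
    {rs : List (MRhs Q D)} (h : ∀ r ∈ rs, ∃ u, MExpand M ss r u) :
    ∃ us, MExpandList M ss rs us := by
  induction rs with
  | nil => exact ⟨[], .nil⟩
  | cons r rs ih =>
    obtain ⟨u, hu⟩ := h r (by simp)
    obtain ⟨us, hus⟩ := ih fun r' hr' => h r' (by simp [hr'])
    exact ⟨u :: us, .cons hu hus⟩

variable {M : MTT Q S D} (A : BUA D P) (F : Set (Behavior M P))

theorem exists_mExpand_of_rhsRun_eq_some {ts : List (RTree S)}
    (hts : ∀ t ∈ ts, ∀ q ρ p, buaRun (behaviorBUA M A F) t q ρ = some p →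
      ∃ u, MEval M q (t.map some) u) (ρ : List P) (r : MRhs Q D) {p : P}
    (hr : rhsRun M A (ts.map (buaRun (behaviorBUA M A F))) ρ r = some p) :
    ∃ u, MExpand M (ts.map (RTree.map some)) r u := by
  induction r generalizing p with
  | out d rs ih =>
    obtain ⟨ps, hps, -⟩ := Option.map_eq_some_iff.mp (by simpa only [rhsRun] using hr)
    obtain ⟨us, hus⟩ := exists_mExpandList fun r hr' =>
      (List.exists_mapM_eq_some_iff.mp ⟨ps, hps⟩ r hr').elim fun _ => ih r hr'
    exact ⟨_, .out hus⟩
  | param j => exact ⟨_, .param⟩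
  | call q i ps ih =>
    simp only [rhsRun, List.getElem?_map, Option.bind_eq_some_iff, Option.map_eq_some_iff] at hr
    obtain ⟨_, ⟨ti, hti, rfl⟩, vs, hvs, hcall⟩ := hr
    obtain ⟨us, hus⟩ := exists_mExpandList fun r hr' =>
      (List.exists_mapM_eq_some_iff.mp ⟨vs, hvs⟩ r hr').elim fun _ => ih r hr'
    obtain ⟨_, hβ⟩ := Option.dite_none_right_eq_some.mp hcall
    obtain ⟨w, hw⟩ := hts ti (List.mem_of_getElem? hti) q _ _ hβ
    exact ⟨_, .call (by simp [hti]) hus hw⟩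

theorem exists_mEval_of_buaRun_behaviorBUA_eq_some (s : RTree S) (q : Q)
    (ρ : List.Vector P (M.prm q)) {p : P} (h : buaRun (behaviorBUA M A F) s q ρ = some p) :
    ∃ u, MEval M q (s.map some) u := by
  induction s generalizing q p with
  | node σ ts ih =>
    obtain ⟨r, hr, hrun⟩ := Option.bind_eq_some_iff.mp (by simpa [behaviorBUA] using h)
    obtain ⟨u, hu⟩ :=
      exists_mExpand_of_rhsRun_eq_some A F (fun t ht q ρ _ => ih t ht q ρ) _ r hrun
    exact ⟨u, by simpa using MEval.step hr hu⟩

end Completeness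

theorem regularTreeLang_wf (rk : S → ℕ) : RegularTreeLang rk {t | RTree.WF rk t} :=
  ⟨Unit, inferInstance, ⟨fun _ _ => (), Set.univ⟩, by simp⟩

namespace MTT

variable {M : MTT Q S D}

theorem wf_of_mem_tau (hM : M.Proper) {s : RTree S} {t : RTree D} (h : (s, t) ∈ M.tau) :
    t.WF M.rkD :=
  -- any output automaton will do: only the well-formedness half of soundness is needed
  (h.2.isOutputTree_paramRun (P := Unit) ⟨fun _ _ => (), ∅⟩ ∅ hM s rfl).1.wf_of_map_out

theorem regularTreeLang_preimage [Finite Q] (hM : M.Proper) {R : Set (RTree D)}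
    (hR : RegularTreeLang M.rkD R) :
    RegularTreeLang M.rkS {s | ∃ t, (s, t) ∈ M.tau ∧ t ∈ R} := by
  obtain ⟨P, _, A, rfl⟩ := hR
  let F : Set (Behavior M P) := {β | ∃ ρ p, β M.init ρ = some p ∧ p ∈ A.final}
  refine ⟨Behavior M P, Fintype.ofFinite _, behaviorBUA M A F, Set.ext fun s => ⟨?_, ?_⟩⟩
  · rintro ⟨t, ⟨hs, hev⟩, -, htA⟩
    obtain ⟨-, hrun⟩ := hev.isOutputTree_paramRun A F hM s rfl
    let ρ₀ : List.Vector P (M.prm M.init) := ⟨[], by simp [hM.1]⟩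
    exact ⟨hs, ρ₀, buaRun A t, by rw [← hrun, paramRun_map_out], htA⟩
  · rintro ⟨hs, ρ, p, hp, hpA⟩
    obtain ⟨u, hev⟩ := exists_mEval_of_buaRun_behaviorBUA_eq_some A F s _ ρ hp
    obtain ⟨hwf, hrun⟩ := hev.isOutputTree_paramRun A F hM s rfl
    rw [hM.1] at hwf
    obtain ⟨t, rfl⟩ := hwf.exists_eq_map_out
    refine ⟨t, ⟨hs, hev⟩, hwf.wf_of_map_out, ?_⟩
    have : some (buaRun A t) = some p := by rw [← paramRun_map_out A ρ.toList, hrun, hp]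
    exact Option.some_injective _ this ▸ hpA

end MTT

theorem mtt_inverse_preserves_regular {Q S D : Type}
    [Fintype Q] [Fintype S] [Fintype D]
    (M : MTT Q S D) (hM : MTT.Proper M)
    (R : Set (RTree D)) (hR : RegularTreeLang M.rkD R) :
    RegularTreeLang M.rkS {s | ∃ t, (s, t) ∈ MTT.tau M ∧ t ∈ R} ∧
    RegularTreeLang M.rkS {s | ∃ t, (s, t) ∈ MTT.tau M} := by
  have hdom : {s | ∃ t, (s, t) ∈ M.tau} = {s | ∃ t, (s, t) ∈ M.tau ∧ t ∈ {t | t.WF M.rkD}} :=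
    Set.ext fun s => exists_congr fun t => (and_iff_left_of_imp (M.wf_of_mem_tau hM)).symm
  rw [hdom]
  exact ⟨M.regularTreeLang_preimage hM hR, M.regularTreeLang_preimage hM (regularTreeLang_wf M.rkD)⟩
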